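/- arXiv:1409.8183 — 2 statements merged into one kernel-verified Lean document; each statement's English description precedes it below -/
import Mathlib

section
/- (Proposition 2.) Let W ⊆ ℝ^{m_w}, let μ be a probability measure on ℝ^{m_w} with μ(W) = 1, and let f(x,w) = A_cl x + B_w w. Suppose X_T ⊆ ℝ^n satisfies: (i) for all x ∈ X_T and all w ∈ W, f(x,w) ∈ X_T (robust positive invariance under the local control law u = Kx); and (ii) for all x ∈ X_T and each row index j, μ({ w : H_j f(x,w) ≤ h_j }) ≥ 1 − ε_j. Then for every initial state x_0 ∈ X_T, every k ≥ 1 and every j, the closed-loop state x_k(w_0,...,w_{k-1}) defined by x_{i+1} = f(x_i, w_i) satisfies μ^k({ (w_0,...,w_{k-1}) : H_j x_k ≤ h_j }) ≥ 1 − ε_j, where μ^k is the k-fold product measure. -/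
/-!
Splitting off the last disturbance, `μ^(l+1){H_j x_{l+1} ≤ h_j}` is the `μ^l`-integral over the
history `(w_0, …, w_{l-1})` of the one-step probability `μ{w | H_j (A_cl x_l + B_w w) ≤ h_j}`.
Along histories in `W^l` the state `x_l` stays in `X_T` by invariance, so the integrand is at
least `1 - ε_j` there; and `W^l` has full outer `μ^l`-measure, so the integral is at least
`1 - ε_j`.
-/

open Matrix MeasureTheory

/-- Closed-loop state `x_k` as a function of the disturbance tuple
`(w_0, ..., w_{k-1})`, for the dynamics `x_{i+1} = A_cl x_i + B_w w_i`. -/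
def closedLoopState {n mw : ℕ} (Acl : Matrix (Fin n) (Fin n) ℝ)
    (Bw : Matrix (Fin n) (Fin mw) ℝ) (x0 : Fin n → ℝ) :
    (k : ℕ) → (Fin k → (Fin mw → ℝ)) → (Fin n → ℝ)
  | 0, _ => x0
  | k + 1, ws =>
      Acl.mulVec (closedLoopState Acl Bw x0 k (fun i => ws i.castSucc))
        + Bw.mulVec (ws (Fin.last k))

open scoped ENNReal

/-- `W i` need not be measurable, so only measurable supersets of `Set.univ.pi W` are co-null. -/
theorem ae_mem_of_univ_pi_subset {ι : Type*} [Fintype ι] {α : ι → Type*}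
    [∀ i, MeasurableSpace (α i)] {μ : ∀ i, Measure (α i)} [∀ i, IsProbabilityMeasure (μ i)]
    {W : ∀ i, Set (α i)} (hW : ∀ i, μ i (W i) = 1) {E : Set (∀ i, α i)}
    (hE : MeasurableSet E) (hWE : Set.univ.pi W ⊆ E) : ∀ᵐ x ∂Measure.pi μ, x ∈ E := by
  have hfull : Measure.pi μ E = 1 :=
    le_antisymm prob_le_one <| by simpa [hW] using measure_mono (μ := Measure.pi μ) hWE
  exact ae_iff.2 ((prob_compl_eq_zero_iff hE).2 hfull)

theorem MeasurableEquiv.piFinSuccAbove_last_symm_apply {α : Type*} [MeasurableSpace α] {l : ℕ}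
    (w : α) (ws : Fin l → α) :
    (MeasurableEquiv.piFinSuccAbove (fun _ : Fin (l + 1) => α) (Fin.last l)).symm (w, ws)
      = Fin.snoc ws w := by
  simp [MeasurableEquiv.piFinSuccAbove_symm_apply, Fin.insertNthEquiv, Fin.insertNth_last']

theorem measurable_snoc {α : Type*} [MeasurableSpace α] {l : ℕ} :
    Measurable fun p : (Fin l → α) × α => (Fin.snoc p.1 p.2 : Fin (l + 1) → α) := by
  convert (MeasurableEquiv.piFinSuccAbove (fun _ : Fin (l + 1) => α)
    (Fin.last l)).symm.measurable.comp measurable_swap with p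
  exact (MeasurableEquiv.piFinSuccAbove_last_symm_apply p.2 p.1).symm

theorem measure_pi_succ_eq_lintegral_snoc {α : Type*} [MeasurableSpace α] (μ : Measure α)
    [SigmaFinite μ] {l : ℕ} {S : Set (Fin (l + 1) → α)} (hS : MeasurableSet S) :
    Measure.pi (fun _ => μ) S
      = ∫⁻ ws, μ {w | Fin.snoc ws w ∈ S} ∂Measure.pi (fun _ : Fin l => μ) := by
  let e := MeasurableEquiv.piFinSuccAbove (fun _ : Fin (l + 1) => α) (Fin.last l)
  rw [← ((measurePreserving_piFinSuccAbove (fun _ => μ) (Fin.last l)).symm e).measure_preimage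
    hS.nullMeasurableSet, Measure.prod_apply_symm (e.symm.measurable hS)]
  simp only [Set.preimage, Set.mem_ofPred_eq, e, MeasurableEquiv.piFinSuccAbove_last_symm_apply]

theorem le_measure_pi_succ_of_forall_snoc {α : Type*} [MeasurableSpace α] {μ : Measure α}
    [IsProbabilityMeasure μ] {W : Set α} (hW : μ W = 1) {l : ℕ} {S : Set (Fin (l + 1) → α)}
    (hS : MeasurableSet S) {c : ℝ≥0∞}
    (hc : ∀ ws : Fin l → α, (∀ i, ws i ∈ W) → c ≤ μ {w | Fin.snoc ws w ∈ S}) :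
    c ≤ Measure.pi (fun _ => μ) S := by
  have hslice : Measurable fun ws : Fin l → α => μ {w | Fin.snoc ws w ∈ S} :=
    measurable_measure_prodMk_left (measurable_snoc hS)
  have hgood : ∀ᵐ ws ∂Measure.pi (fun _ : Fin l => μ), c ≤ μ {w | Fin.snoc ws w ∈ S} :=
    ae_mem_of_univ_pi_subset (fun _ => hW) (hslice measurableSet_Ici)
      fun ws hws => hc ws fun i => hws i (Set.mem_univ i)
  calc c = ∫⁻ _, c ∂Measure.pi (fun _ : Fin l => μ) := by simp
    _ ≤ _ := (lintegral_mono_ae hgood).trans_eq (measure_pi_succ_eq_lintegral_snoc μ hS).symm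

theorem closedLoopState_snoc {n mw : ℕ} (Acl : Matrix (Fin n) (Fin n) ℝ)
    (Bw : Matrix (Fin n) (Fin mw) ℝ) (x0 : Fin n → ℝ) {k : ℕ} (ws : Fin k → Fin mw → ℝ)
    (w : Fin mw → ℝ) :
    closedLoopState Acl Bw x0 (k + 1) (Fin.snoc ws w)
      = Acl *ᵥ closedLoopState Acl Bw x0 k ws + Bw *ᵥ w := by
  simp [closedLoopState]

theorem continuous_closedLoopState {n mw : ℕ} (Acl : Matrix (Fin n) (Fin n) ℝ)
    (Bw : Matrix (Fin n) (Fin mw) ℝ) (x0 : Fin n → ℝ) (k : ℕ) :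
    Continuous (closedLoopState Acl Bw x0 k) := by
  induction k with
  | zero => exact continuous_const
  | succ k ih =>
    exact (continuous_const.matrix_mulVec (ih.comp (continuous_pi fun i => continuous_apply _))).add
      (continuous_const.matrix_mulVec (continuous_apply _))

theorem closedLoopState_mem {n mw : ℕ} {Acl : Matrix (Fin n) (Fin n) ℝ}
    {Bw : Matrix (Fin n) (Fin mw) ℝ} {W : Set (Fin mw → ℝ)} {X : Set (Fin n → ℝ)}
    (hX : ∀ x ∈ X, ∀ w ∈ W, Acl *ᵥ x + Bw *ᵥ w ∈ X) {x0 : Fin n → ℝ} (hx0 : x0 ∈ X) {k : ℕ}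
    (ws : Fin k → Fin mw → ℝ) (hws : ∀ i, ws i ∈ W) : closedLoopState Acl Bw x0 k ws ∈ X := by
  induction k with
  | zero => exact hx0
  | succ k ih => exact hX _ (ih _ fun i => hws i.castSucc) _ (hws _)

theorem terminal_set_closed_loop_chance_constraints_general
    {n m mw : ℕ} {ι : Type*}
    (A : Matrix (Fin n) (Fin n) ℝ) (B : Matrix (Fin n) (Fin m) ℝ)
    (Bw : Matrix (Fin n) (Fin mw) ℝ) (K : Matrix (Fin m) (Fin n) ℝ)
    (W : Set (Fin mw → ℝ))
    (μ : Measure (Fin mw → ℝ)) [IsProbabilityMeasure μ]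
    (hW : μ W = 1)
    (H : ι → (Fin n → ℝ)) (h : ι → ℝ) (ε : ι → ℝ)
    (XT : Set (Fin n → ℝ))
    (hinv : ∀ x ∈ XT, ∀ w ∈ W, (A + B * K).mulVec x + Bw.mulVec w ∈ XT)
    (hchance : ∀ x ∈ XT, ∀ j,
      ENNReal.ofReal (1 - ε j)
        ≤ μ {w | H j ⬝ᵥ ((A + B * K).mulVec x + Bw.mulVec w) ≤ h j}) :
    ∀ x0 ∈ XT, ∀ k, 1 ≤ k → ∀ j,
      ENNReal.ofReal (1 - ε j)
        ≤ Measure.pi (fun _ : Fin k => μ)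
            {ws | H j ⬝ᵥ closedLoopState (A + B * K) Bw x0 k ws ≤ h j} := by
  intro x0 hx0 k hk j
  obtain ⟨l, rfl⟩ := Nat.exists_eq_add_of_le' hk
  refine le_measure_pi_succ_of_forall_snoc hW ?_ fun ws hws => ?_
  · exact measurableSet_le
      (continuous_const.dotProduct (continuous_closedLoopState _ _ _ _)).measurable measurable_const
  · simpa only [Set.mem_ofPred_eq, closedLoopState_snoc] using
      hchance _ (closedLoopState_mem hinv hx0 ws hws) j

/-- Proposition 2: if `X_T` is robust positive invariant for
`f(x,w) = A_cl x + B_w w` with disturbances supported in `W`, and from every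
point of `X_T` each row chance constraint holds one step ahead, then along the
closed loop starting in `X_T` every chance constraint
`μ^k{ H_j x_k ≤ h_j } ≥ 1 − ε_j` holds for all `k ≥ 1`. -/
theorem terminal_set_closed_loop_chance_constraints
    {n m mw : ℕ} {ι : Type*}
    (A : Matrix (Fin n) (Fin n) ℝ) (B : Matrix (Fin n) (Fin m) ℝ)
    (Bw : Matrix (Fin n) (Fin mw) ℝ) (K : Matrix (Fin m) (Fin n) ℝ)
    (W : Set (Fin mw → ℝ))
    (μ : Measure (Fin mw → ℝ)) [IsProbabilityMeasure μ]
    (hW : μ W = 1)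
    (H : ι → (Fin n → ℝ)) (h : ι → ℝ) (ε : ι → ℝ)
    (hε0 : ∀ j, 0 ≤ ε j) (hε1 : ∀ j, ε j < 1)
    (XT : Set (Fin n → ℝ))
    (hinv : ∀ x ∈ XT, ∀ w ∈ W, (A + B * K).mulVec x + Bw.mulVec w ∈ XT)
    (hchance : ∀ x ∈ XT, ∀ j,
      ENNReal.ofReal (1 - ε j)
        ≤ μ {w | H j ⬝ᵥ ((A + B * K).mulVec x + Bw.mulVec w) ≤ h j}) :
    ∀ x0 ∈ XT, ∀ k, 1 ≤ k → ∀ j,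
      ENNReal.ofReal (1 - ε j)
        ≤ Measure.pi (fun _ : Fin k => μ)
            {ws | H j ⬝ᵥ closedLoopState (A + B * K) Bw x0 k ws ≤ h j} :=
  terminal_set_closed_loop_chance_constraints_general A B Bw K W μ hW H h ε XT hinv hchance
end

section
/- (Expected cost of the shifted candidate sequence.) Let z_{l+1} = A z_l + B v_l for l = 0,...,T−1 with z_0 ∈ ℝ^n and inputs v_0,...,v_{T−1} ∈ ℝ^m, and define J_T(x, (v_l)) = Σ_{l=0}^{T−1} (z_lᵀ Q z_l + v_lᵀ R v_l) + z_Tᵀ P z_T where z_0 = x. Let P satisfy A_clᵀ P A_cl + Q + Kᵀ R K = P with A_cl = A + B K. Let w be an ℝ^{m_w}-valued random vector with E[w] = 0 and finite second moments, and set d = B_w w. Define the candidate inputs v_l'(d) = v_{l+1} + K A_cl^l d for l = 0,...,T−2 and v_{T−1}'(d) = K (z_T + A_cl^{T−1} d). Then E[ J_T( z_1 + d, (v_l'(d)) ) ] = J_T(z_0, (v_l)) − z_0ᵀ Q z_0 − v_0ᵀ R v_0 + E[ dᵀ P d ]. -/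
open Matrix Finset MeasureTheory

/-- Nominal trajectory `z_{l+1} = A z_l + B v_l` with `z_0 = x`. -/
def nomTraj {n m : ℕ} (A : Matrix (Fin n) (Fin n) ℝ) (B : Matrix (Fin n) (Fin m) ℝ)
    (x : Fin n → ℝ) (v : ℕ → Fin m → ℝ) : ℕ → (Fin n → ℝ)
  | 0 => x
  | l + 1 => A.mulVec (nomTraj A B x v l) + B.mulVec (v l)

/-- Finite-horizon cost `J_T(x, (v_l)) = ∑_{l<T} (z_lᵀ Q z_l + v_lᵀ R v_l) + z_Tᵀ P z_T`. -/
def costJ {n m : ℕ} (A : Matrix (Fin n) (Fin n) ℝ) (B : Matrix (Fin n) (Fin m) ℝ)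
    (Q P : Matrix (Fin n) (Fin n) ℝ) (R : Matrix (Fin m) (Fin m) ℝ)
    (T : ℕ) (x : Fin n → ℝ) (v : ℕ → Fin m → ℝ) : ℝ :=
  (∑ l ∈ Finset.range T,
      (nomTraj A B x v l ⬝ᵥ Q.mulVec (nomTraj A B x v l) + v l ⬝ᵥ R.mulVec (v l)))
    + nomTraj A B x v T ⬝ᵥ P.mulVec (nomTraj A B x v T)

/-! The candidate input is the shifted nominal input, with the feedback `K z_T` appended, plus
the closed-loop response to `d`, whose state trajectory is `A_clˡ d`. Since the trajectory is
linear in (initial state, input), the cost of the sum splits into three parts. The Lyapunov equation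
makes one extra feedback step cost-neutral, so the shifted nominal part costs
`J_T(z₀, v) - z₀ᵀQz₀ - v₀ᵀRv₀` and the closed-loop part costs `dᵀPd`. The remaining cross term is
linear in `w`, so its expectation vanishes because `E[w] = 0`. -/

section Trajectory

variable {n m : ℕ} (A : Matrix (Fin n) (Fin n) ℝ) (B : Matrix (Fin n) (Fin m) ℝ)

lemma nomTraj_add (x y : Fin n → ℝ) (v u : ℕ → Fin m → ℝ) (l : ℕ) :
    nomTraj A B (x + y) (v + u) l = nomTraj A B x v l + nomTraj A B y u l := by
  induction l with
  | zero => rfl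
  | succ l ih => simp only [nomTraj, ih, Pi.add_apply, mulVec_add]; abel

lemma nomTraj_smul (c : ℝ) (x : Fin n → ℝ) (v : ℕ → Fin m → ℝ) (l : ℕ) :
    nomTraj A B (c • x) (c • v) l = c • nomTraj A B x v l := by
  induction l with
  | zero => rfl
  | succ l ih => simp only [nomTraj, ih, Pi.smul_apply, mulVec_smul, smul_add]

lemma nomTraj_congr {x : Fin n → ℝ} {v u : ℕ → Fin m → ℝ} {l : ℕ} (h : ∀ k < l, v k = u k) :
    nomTraj A B x v l = nomTraj A B x u l := by
  induction l with
  | zero => rfl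
  | succ l ih =>
    simp only [nomTraj, ih fun k hk => h k (by omega), h l l.lt_succ_self]

lemma nomTraj_from_one (x : Fin n → ℝ) (v : ℕ → Fin m → ℝ) (l : ℕ) :
    nomTraj A B (nomTraj A B x v 1) (fun k => v (k + 1)) l = nomTraj A B x v (l + 1) := by
  induction l with
  | zero => rfl
  | succ l ih => rw [nomTraj, ih]; rfl

lemma nomTraj_feedback (K : Matrix (Fin m) (Fin n) ℝ) (x : Fin n → ℝ) (l : ℕ) :
    nomTraj A B x (fun k => K *ᵥ ((A + B * K) ^ k *ᵥ x)) l = (A + B * K) ^ l *ᵥ x := by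
  induction l with
  | zero => simp [nomTraj]
  | succ l ih => simp only [nomTraj, ih, pow_succ', ← mulVec_mulVec, add_mulVec]

end Trajectory

section Cost

variable {n m : ℕ} (A : Matrix (Fin n) (Fin n) ℝ) (B : Matrix (Fin n) (Fin m) ℝ)
  (Q P : Matrix (Fin n) (Fin n) ℝ) (R : Matrix (Fin m) (Fin m) ℝ)

def costCross (T : ℕ) (x : Fin n → ℝ) (v : ℕ → Fin m → ℝ) (y : Fin n → ℝ)
    (u : ℕ → Fin m → ℝ) : ℝ :=
  (∑ l ∈ range T,
      (nomTraj A B x v l ⬝ᵥ Q *ᵥ nomTraj A B y u l + nomTraj A B y u l ⬝ᵥ Q *ᵥ nomTraj A B x v l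
        + v l ⬝ᵥ R *ᵥ u l + u l ⬝ᵥ R *ᵥ v l))
    + nomTraj A B x v T ⬝ᵥ P *ᵥ nomTraj A B y u T + nomTraj A B y u T ⬝ᵥ P *ᵥ nomTraj A B x v T

lemma costJ_add (T : ℕ) (x y : Fin n → ℝ) (v u : ℕ → Fin m → ℝ) :
    costJ A B Q P R T (x + y) (v + u)
      = costJ A B Q P R T x v + costJ A B Q P R T y u + costCross A B Q P R T x v y u := by
  simp only [costJ, costCross, nomTraj_add, Pi.add_apply, mulVec_add, dotProduct_add,
    add_dotProduct, sum_add_distrib]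
  ring

lemma costCross_add_right (T : ℕ) (x : Fin n → ℝ) (v : ℕ → Fin m → ℝ) (y₁ y₂ : Fin n → ℝ)
    (u₁ u₂ : ℕ → Fin m → ℝ) :
    costCross A B Q P R T x v (y₁ + y₂) (u₁ + u₂)
      = costCross A B Q P R T x v y₁ u₁ + costCross A B Q P R T x v y₂ u₂ := by
  simp only [costCross, nomTraj_add, Pi.add_apply, mulVec_add, dotProduct_add,
    add_dotProduct, sum_add_distrib]
  ring

lemma costCross_smul_right (T : ℕ) (x : Fin n → ℝ) (v : ℕ → Fin m → ℝ) (c : ℝ)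
    (y : Fin n → ℝ) (u : ℕ → Fin m → ℝ) :
    costCross A B Q P R T x v (c • y) (c • u) = c * costCross A B Q P R T x v y u := by
  simp only [costCross, nomTraj_smul, Pi.smul_apply, mulVec_smul, dotProduct_smul,
    smul_dotProduct, smul_eq_mul, mul_add, mul_sum]

lemma costJ_succ (T : ℕ) (x : Fin n → ℝ) (v : ℕ → Fin m → ℝ) :
    costJ A B Q P R (T + 1) x v
      = x ⬝ᵥ Q *ᵥ x + v 0 ⬝ᵥ R *ᵥ v 0
        + costJ A B Q P R T (nomTraj A B x v 1) (fun k => v (k + 1)) := by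
  simp only [costJ, sum_range_succ' _ T, nomTraj_from_one]
  simp only [nomTraj]
  ring

end Cost

section Lyapunov

variable {n m : ℕ} {A : Matrix (Fin n) (Fin n) ℝ} {B : Matrix (Fin n) (Fin m) ℝ}
  {K : Matrix (Fin m) (Fin n) ℝ} {Q P : Matrix (Fin n) (Fin n) ℝ} {R : Matrix (Fin m) (Fin m) ℝ}

lemma stage_add_next_eq_of_lyapunov
    (hLyap : (A + B * K)ᵀ * P * (A + B * K) + Q + Kᵀ * R * K = P) (y : Fin n → ℝ) :
    y ⬝ᵥ Q *ᵥ y + K *ᵥ y ⬝ᵥ R *ᵥ (K *ᵥ y) + (A + B * K) *ᵥ y ⬝ᵥ P *ᵥ ((A + B * K) *ᵥ y)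
      = y ⬝ᵥ P *ᵥ y := by
  conv_rhs => rw [← hLyap]
  simp only [add_mulVec, dotProduct_add, ← mulVec_mulVec, dotProduct_mulVec y, vecMul_transpose]
  ring

lemma costJ_succ_of_feedback
    (hLyap : (A + B * K)ᵀ * P * (A + B * K) + Q + Kᵀ * R * K = P) {T : ℕ} {x : Fin n → ℝ}
    {v u : ℕ → Fin m → ℝ} (hu : ∀ k < T, u k = v k) (huT : u T = K *ᵥ nomTraj A B x v T) :
    costJ A B Q P R (T + 1) x u = costJ A B Q P R T x v := by
  have hz : ∀ l ≤ T, nomTraj A B x u l = nomTraj A B x v l := fun l hl =>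
    nomTraj_congr A B fun k hk => hu k (by omega)
  have hzT : nomTraj A B x u (T + 1) = (A + B * K) *ᵥ nomTraj A B x v T := by
    simp only [nomTraj, hz T le_rfl, huT, add_mulVec, mulVec_mulVec]
  have hsum : ∑ l ∈ range T, (nomTraj A B x u l ⬝ᵥ Q *ᵥ nomTraj A B x u l + u l ⬝ᵥ R *ᵥ u l)
      = ∑ l ∈ range T, (nomTraj A B x v l ⬝ᵥ Q *ᵥ nomTraj A B x v l + v l ⬝ᵥ R *ᵥ v l) :=
    sum_congr rfl fun l hl => by
      rw [hz l (mem_range.mp hl).le, hu l (mem_range.mp hl)]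
  rw [costJ, costJ, sum_range_succ, hsum, hzT, hz T le_rfl, huT]
  linear_combination stage_add_next_eq_of_lyapunov hLyap (nomTraj A B x v T)

lemma costJ_feedback (hLyap : (A + B * K)ᵀ * P * (A + B * K) + Q + Kᵀ * R * K = P)
    (T : ℕ) (x : Fin n → ℝ) :
    costJ A B Q P R T x (fun k => K *ᵥ ((A + B * K) ^ k *ᵥ x)) = x ⬝ᵥ P *ᵥ x := by
  induction T with
  | zero => simp [costJ, nomTraj]
  | succ T ih =>
    rw [costJ_succ_of_feedback hLyap (fun _ _ => rfl) (by rw [nomTraj_feedback]), ih]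

lemma costJ_shift_of_feedback
    (hLyap : (A + B * K)ᵀ * P * (A + B * K) + Q + Kᵀ * R * K = P) (T : ℕ) (x : Fin n → ℝ)
    (v : ℕ → Fin m → ℝ) :
    costJ A B Q P R (T + 1) (nomTraj A B x v 1)
        (fun l => if l = T then K *ᵥ nomTraj A B x v (T + 1) else v (l + 1))
      = costJ A B Q P R (T + 1) x v - x ⬝ᵥ Q *ᵥ x - v 0 ⬝ᵥ R *ᵥ v 0 := by
  rw [costJ_succ_of_feedback hLyap (v := fun k => v (k + 1)) (fun k hk => if_neg hk.ne)
    (by simp [nomTraj_from_one]), costJ_succ]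
  ring

end Lyapunov

section Expectation

variable {Ω : Type*} [MeasurableSpace Ω] {μ : Measure Ω}

lemma memLp_mulVec {k l : ℕ} {p : ENNReal} {y : Ω → Fin k → ℝ} (hy : MemLp y p μ)
    (M : Matrix (Fin l) (Fin k) ℝ) : MemLp (fun ω => M *ᵥ y ω) p μ :=
  (LinearMap.toContinuousLinearMap M.mulVecLin).comp_memLp' hy

lemma integrable_dotProduct {k : ℕ} {y z : Ω → Fin k → ℝ} (hy : MemLp y 2 μ)
    (hz : MemLp z 2 μ) : Integrable (fun ω => y ω ⬝ᵥ z ω) μ :=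
  integrable_finsetSum _ fun i _ => (hy.eval i).integrable_mul (hz.eval i)

lemma integral_linearMap_eq_zero {E F : Type*} [NormedAddCommGroup E] [NormedSpace ℝ E]
    [FiniteDimensional ℝ E] [NormedAddCommGroup F] [NormedSpace ℝ F] [CompleteSpace F]
    (L : E →ₗ[ℝ] F) {w : Ω → E} (hw : Integrable w μ) (hmean : ∫ ω, w ω ∂μ = 0) :
    ∫ ω, L (w ω) ∂μ = 0 := by
  simpa [hmean] using (LinearMap.toContinuousLinearMap L).integral_comp_comm hw

end Expectation

section CrossTerm

variable {n m k : ℕ} (A : Matrix (Fin n) (Fin n) ℝ) (B : Matrix (Fin n) (Fin m) ℝ)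
  (Q P : Matrix (Fin n) (Fin n) ℝ) (R : Matrix (Fin m) (Fin m) ℝ) (T : ℕ) (x : Fin n → ℝ)
  (v : ℕ → Fin m → ℝ) (H : Matrix (Fin n) (Fin k) ℝ) (G : ℕ → Matrix (Fin m) (Fin k) ℝ)
  {Ω : Type*} [MeasurableSpace Ω] {μ : Measure Ω} {w : Ω → Fin k → ℝ}

def costCrossLinearMap : (Fin k → ℝ) →ₗ[ℝ] ℝ where
  toFun ξ := costCross A B Q P R T x v (H *ᵥ ξ) (fun l => G l *ᵥ ξ)
  map_add' ξ η := by
    simp only [mulVec_add]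
    exact costCross_add_right A B Q P R T x v _ _ _ _
  map_smul' c ξ := by
    simp only [mulVec_smul]
    exact costCross_smul_right A B Q P R T x v c _ _

lemma integrable_costCross (hw : Integrable w μ) :
    Integrable (fun ω => costCross A B Q P R T x v (H *ᵥ w ω) (fun l => G l *ᵥ w ω)) μ :=
  (LinearMap.toContinuousLinearMap (costCrossLinearMap A B Q P R T x v H G)).integrable_comp hw

lemma integral_costCross_eq_zero (hw : Integrable w μ) (hmean : ∫ ω, w ω ∂μ = 0) :
    ∫ ω, costCross A B Q P R T x v (H *ᵥ w ω) (fun l => G l *ᵥ w ω) ∂μ = 0 :=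
  integral_linearMap_eq_zero (costCrossLinearMap A B Q P R T x v H G) hw hmean

end CrossTerm

theorem expected_cost_of_shifted_candidate_general
    {n m mw : ℕ}
    (A : Matrix (Fin n) (Fin n) ℝ) (B : Matrix (Fin n) (Fin m) ℝ)
    (Bw : Matrix (Fin n) (Fin mw) ℝ) (K : Matrix (Fin m) (Fin n) ℝ)
    (Q P : Matrix (Fin n) (Fin n) ℝ) (R : Matrix (Fin m) (Fin m) ℝ)
    (hLyap : (A + B * K)ᵀ * P * (A + B * K) + Q + Kᵀ * R * K = P)
    (T : ℕ) (hT : 1 ≤ T)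
    (z0 : Fin n → ℝ) (v : ℕ → Fin m → ℝ)
    {Ω : Type*} [MeasurableSpace Ω] (μ : Measure Ω) [IsProbabilityMeasure μ]
    (w : Ω → (Fin mw → ℝ))
    (hL2 : MemLp w 2 μ) (hmean : ∫ ω, w ω ∂μ = 0) :
    ∫ ω, costJ A B Q P R T (nomTraj A B z0 v 1 + Bw.mulVec (w ω))
        (fun l =>
          if l = T - 1 then
            K.mulVec (nomTraj A B z0 v T + ((A + B * K) ^ (T - 1)).mulVec (Bw.mulVec (w ω)))
          else
            v (l + 1) + K.mulVec (((A + B * K) ^ l).mulVec (Bw.mulVec (w ω)))) ∂μ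
      = costJ A B Q P R T z0 v - z0 ⬝ᵥ Q.mulVec z0 - v 0 ⬝ᵥ R.mulVec (v 0)
        + ∫ ω, Bw.mulVec (w ω) ⬝ᵥ P.mulVec (Bw.mulVec (w ω)) ∂μ := by
  obtain ⟨S, rfl⟩ : ∃ S, T = S + 1 := ⟨T - 1, by omega⟩
  simp only [Nat.add_sub_cancel]
  let vs : ℕ → Fin m → ℝ := fun l => if l = S then K *ᵥ nomTraj A B z0 v (S + 1) else v (l + 1)
  let G : ℕ → Matrix (Fin m) (Fin mw) ℝ := fun l => K * (A + B * K) ^ l * Bw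
  have hinput : ∀ ω, (fun l => if l = S then
        K *ᵥ (nomTraj A B z0 v (S + 1) + (A + B * K) ^ S *ᵥ (Bw *ᵥ w ω))
      else v (l + 1) + K *ᵥ ((A + B * K) ^ l *ᵥ (Bw *ᵥ w ω))) = vs + fun l => G l *ᵥ w ω := by
    intro ω
    funext l
    by_cases hl : l = S <;> simp [vs, G, hl, mulVec_add, mulVec_mulVec, Matrix.mul_assoc]
  have hnominal : costJ A B Q P R (S + 1) (nomTraj A B z0 v 1) vs
      = costJ A B Q P R (S + 1) z0 v - z0 ⬝ᵥ Q *ᵥ z0 - v 0 ⬝ᵥ R *ᵥ v 0 :=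
    costJ_shift_of_feedback hLyap S z0 v
  have hnoise : ∀ ω, costJ A B Q P R (S + 1) (Bw *ᵥ w ω) (fun l => G l *ᵥ w ω)
      = Bw *ᵥ w ω ⬝ᵥ P *ᵥ (Bw *ᵥ w ω) := fun ω => by
    simpa only [G, ← mulVec_mulVec] using costJ_feedback hLyap (S + 1) (Bw *ᵥ w ω)
  have hw : Integrable w μ := hL2.integrable one_le_two
  have hq : Integrable (fun ω => Bw *ᵥ w ω ⬝ᵥ P *ᵥ (Bw *ᵥ w ω)) μ :=
    integrable_dotProduct (memLp_mulVec hL2 Bw) (memLp_mulVec (memLp_mulVec hL2 Bw) P)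
  simp_rw [hinput, costJ_add, hnominal, hnoise]
  rw [integral_add _ (integrable_costCross A B Q P R _ _ vs Bw G hw),
    integral_costCross_eq_zero A B Q P R _ _ vs Bw G hw hmean, add_zero,
    integral_add (integrable_const _) hq, integral_const, probReal_univ, one_smul]
  exact (integrable_const _).add hq

/-- expected cost of the shifted candidate sequence:
with `d = B_w w`, candidate inputs `v_l' = v_{l+1} + K A_cl^l d` for
`l < T−1` and `v_{T−1}' = K (z_T + A_cl^{T−1} d)`,
`E[J_T(z_1 + d, (v_l'))] = J_T(z_0, (v_l)) − z_0ᵀ Q z_0 − v_0ᵀ R v_0 + E[dᵀ P d]`. -/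
theorem expected_cost_of_shifted_candidate
    {n m mw : ℕ}
    (A : Matrix (Fin n) (Fin n) ℝ) (B : Matrix (Fin n) (Fin m) ℝ)
    (Bw : Matrix (Fin n) (Fin mw) ℝ) (K : Matrix (Fin m) (Fin n) ℝ)
    (Q P : Matrix (Fin n) (Fin n) ℝ) (R : Matrix (Fin m) (Fin m) ℝ)
    (hQ : Q.IsSymm) (hR : R.IsSymm)
    (hLyap : (A + B * K)ᵀ * P * (A + B * K) + Q + Kᵀ * R * K = P)
    (T : ℕ) (hT : 1 ≤ T)
    (z0 : Fin n → ℝ) (v : ℕ → Fin m → ℝ)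
    {Ω : Type*} [MeasurableSpace Ω] (μ : Measure Ω) [IsProbabilityMeasure μ]
    (w : Ω → (Fin mw → ℝ)) (hmeas : Measurable w)
    (hL2 : MemLp w 2 μ) (hmean : ∫ ω, w ω ∂μ = 0) :
    ∫ ω, costJ A B Q P R T (nomTraj A B z0 v 1 + Bw.mulVec (w ω))
        (fun l =>
          if l = T - 1 then
            K.mulVec (nomTraj A B z0 v T + ((A + B * K) ^ (T - 1)).mulVec (Bw.mulVec (w ω)))
          else
            v (l + 1) + K.mulVec (((A + B * K) ^ l).mulVec (Bw.mulVec (w ω)))) ∂μ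
      = costJ A B Q P R T z0 v - z0 ⬝ᵥ Q.mulVec z0 - v 0 ⬝ᵥ R.mulVec (v 0)
        + ∫ ω, Bw.mulVec (w ω) ⬝ᵥ P.mulVec (Bw.mulVec (w ω)) ∂μ :=
  expected_cost_of_shifted_candidate_general A B Bw K Q P R hLyap T hT z0 v μ w hL2 hmean
end
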